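/- Let α, β, ζ₁, ζ₂, S₁, S₂ ∈ ℝ and let a, b ∈ ℝ² be linearly independent. Let P be the 2×2 matrix whose first row is aᵀ and second row is bᵀ, and define d := P⁻¹(S₁ − ζ₁, S₂ − ζ₂) and c := P⁻¹(α, β). Suppose the system α‖x‖² + ⟨a,x⟩ + ζ₁ = S₁, β‖x‖² + ⟨b,x⟩ + ζ₂ = S₂ has at least one solution x ∈ ℝ², and let μ₁ be the smallest real root of ‖c‖²μ² − (2⟨d,c⟩ + 1)μ + ‖d‖² = 0 (taking μ₁ := ‖d‖² if c = 0). Then x₁ := d − μ₁c is a solution of the system, and for every solution x of the system one has ‖x₁‖ ≤ ‖x‖. -/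

import Mathlib

/-!
Applying `P⁻¹` to the system shows that `x` is a solution exactly when `x = d - ‖x‖² c`.
For a vector of the form `d - μ c`, the condition `‖d - μ c‖² = μ` is the scalar quadratic,
so the squared norms of the solutions are exactly its roots, each root `μ` giving the
solution `d - μ c`; the smallest root therefore gives the solution of least norm.
-/

open scoped RealInnerProductSpace

/-- Interpret a plain vector `Fin 2 → ℝ` as an element of Euclidean space `ℝ²`. -/
noncomputable def toE (v : Fin 2 → ℝ) : EuclideanSpace ℝ (Fin 2) := WithLp.toLp 2 v

/-- The 2×2 matrix whose first row is `aᵀ` and second row is `bᵀ`. -/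
noncomputable def Pmat (a b : EuclideanSpace ℝ (Fin 2)) : Matrix (Fin 2) (Fin 2) ℝ :=
  !![a 0, a 1; b 0, b 1]

/-- `d := P⁻¹ (S₁ − ζ₁, S₂ − ζ₂)`. -/
noncomputable def dvec (a b : EuclideanSpace ℝ (Fin 2)) (ζ₁ ζ₂ S₁ S₂ : ℝ) :
    EuclideanSpace ℝ (Fin 2) :=
  toE ((Pmat a b)⁻¹.mulVec ![S₁ - ζ₁, S₂ - ζ₂])

/-- `c := P⁻¹ (α, β)`. -/
noncomputable def cvec (a b : EuclideanSpace ℝ (Fin 2)) (α β : ℝ) :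
    EuclideanSpace ℝ (Fin 2) :=
  toE ((Pmat a b)⁻¹.mulVec ![α, β])

section InnerProductSpace

variable {E : Type*} [NormedAddCommGroup E] [InnerProductSpace ℝ E]

theorem sq_norm_sub_smul_eq_self_iff (d c : E) (μ : ℝ) :
    ‖d - μ • c‖ ^ 2 = μ ↔ ‖c‖ ^ 2 * μ ^ 2 - (2 * ⟪d, c⟫ + 1) * μ + ‖d‖ ^ 2 = 0 := by
  have hexpand : ‖d - μ • c‖ ^ 2 = ‖d‖ ^ 2 - 2 * μ * ⟪d, c⟫ + μ ^ 2 * ‖c‖ ^ 2 := by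
    rw [norm_sub_sq_real, real_inner_smul_right, norm_smul, Real.norm_eq_abs, mul_pow, sq_abs]
    ring
  constructor <;> intro h
  · linear_combination hexpand.symm + h
  · linear_combination hexpand + h

variable {a d c : E} {α ζ S : ℝ}

theorem output_eq_of_sq_norm_sub_smul_eq_self (hd : ⟪a, d⟫ = S - ζ) (hc : ⟪a, c⟫ = α) {μ : ℝ}
    (hμ : ‖d - μ • c‖ ^ 2 = μ) : α * ‖d - μ • c‖ ^ 2 + ⟪a, d - μ • c⟫ + ζ = S := by
  rw [hμ, inner_sub_right, real_inner_smul_right, hd, hc]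
  ring

theorem inner_eq_inner_sub_sq_norm_smul (hd : ⟪a, d⟫ = S - ζ) (hc : ⟪a, c⟫ = α) {x : E}
    (hx : α * ‖x‖ ^ 2 + ⟪a, x⟫ + ζ = S) : ⟪a, x⟫ = ⟪a, d - ‖x‖ ^ 2 • c⟫ := by
  rw [inner_sub_right, real_inner_smul_right, hd, hc]
  linarith

theorem eq_of_inner_eq_of_linearIndependent [FiniteDimensional ℝ E] (hE : Module.finrank ℝ E = 2)
    {a b x y : E} (hab : LinearIndependent ℝ ![a, b]) (ha : ⟪a, x⟫ = ⟪a, y⟫)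
    (hb : ⟪b, x⟫ = ⟪b, y⟫) : x = y := by
  let B := basisOfLinearIndependentOfCardEqFinrank hab (by simp [hE])
  refine InnerProductSpace.ext_inner_left_basis B fun i => ?_
  fin_cases i <;> simpa [B, coe_basisOfLinearIndependentOfCardEqFinrank]

end InnerProductSpace

theorem Pmat_mulVec (a b x : EuclideanSpace ℝ (Fin 2)) :
    (Pmat a b).mulVec x.ofLp = ![⟪a, x⟫, ⟪b, x⟫] := by
  ext i
  fin_cases i <;> simp [Pmat, Matrix.mulVec, dotProduct, PiLp.inner_apply, Fin.sum_univ_two,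
    mul_comm]

theorem isUnit_Pmat {a b : EuclideanSpace ℝ (Fin 2)} (hab : LinearIndependent ℝ ![a, b]) :
    IsUnit (Pmat a b) := by
  rw [← Matrix.linearIndependent_rows_iff_isUnit]
  have hrows : (Pmat a b).row = WithLp.linearEquiv 2 ℝ (Fin 2 → ℝ) ∘ ![a, b] := by
    ext i j
    fin_cases i <;> fin_cases j <;> rfl
  rw [hrows]
  exact hab.map' _ (LinearEquiv.ker _)

theorem inner_toE_inv_mulVec {a b : EuclideanSpace ℝ (Fin 2)} (hab : LinearIndependent ℝ ![a, b])
    (v : Fin 2 → ℝ) :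
    ⟪a, toE ((Pmat a b)⁻¹.mulVec v)⟫ = v 0 ∧ ⟪b, toE ((Pmat a b)⁻¹.mulVec v)⟫ = v 1 := by
  have h := Pmat_mulVec a b (toE ((Pmat a b)⁻¹.mulVec v))
  rw [toE, Matrix.mulVec_mulVec, Matrix.mul_nonsing_inv _
    ((Matrix.isUnit_iff_isUnit_det _).mp (isUnit_Pmat hab)), Matrix.one_mulVec] at h
  exact ⟨(congrFun h 0).symm, (congrFun h 1).symm⟩

theorem stmt12_general (α β ζ₁ ζ₂ S₁ S₂ : ℝ) (a b : EuclideanSpace ℝ (Fin 2))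
    (hab : LinearIndependent ℝ ![a, b])
    (μ₁ : ℝ)
    (hroot : ‖cvec a b α β‖ ^ 2 * μ₁ ^ 2 -
      (2 * ⟪dvec a b ζ₁ ζ₂ S₁ S₂, cvec a b α β⟫ + 1) * μ₁ +
      ‖dvec a b ζ₁ ζ₂ S₁ S₂‖ ^ 2 = 0)
    (hsmallest : ∀ μ : ℝ, ‖cvec a b α β‖ ^ 2 * μ ^ 2 -
      (2 * ⟪dvec a b ζ₁ ζ₂ S₁ S₂, cvec a b α β⟫ + 1) * μ +
      ‖dvec a b ζ₁ ζ₂ S₁ S₂‖ ^ 2 = 0 → μ₁ ≤ μ) :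
    (α * ‖dvec a b ζ₁ ζ₂ S₁ S₂ - μ₁ • cvec a b α β‖ ^ 2 +
        ⟪a, dvec a b ζ₁ ζ₂ S₁ S₂ - μ₁ • cvec a b α β⟫ + ζ₁ = S₁ ∧
      β * ‖dvec a b ζ₁ ζ₂ S₁ S₂ - μ₁ • cvec a b α β‖ ^ 2 +
        ⟪b, dvec a b ζ₁ ζ₂ S₁ S₂ - μ₁ • cvec a b α β⟫ + ζ₂ = S₂) ∧
    ∀ x : EuclideanSpace ℝ (Fin 2),
      α * ‖x‖ ^ 2 + ⟪a, x⟫ + ζ₁ = S₁ → β * ‖x‖ ^ 2 + ⟪b, x⟫ + ζ₂ = S₂ →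
      ‖dvec a b ζ₁ ζ₂ S₁ S₂ - μ₁ • cvec a b α β‖ ≤ ‖x‖ := by
  set d := dvec a b ζ₁ ζ₂ S₁ S₂
  set c := cvec a b α β
  obtain ⟨had, hbd⟩ : ⟪a, d⟫ = S₁ - ζ₁ ∧ ⟪b, d⟫ = S₂ - ζ₂ := inner_toE_inv_mulVec hab _
  obtain ⟨hac, hbc⟩ : ⟪a, c⟫ = α ∧ ⟪b, c⟫ = β := inner_toE_inv_mulVec hab _
  have hμ₁ : ‖d - μ₁ • c‖ ^ 2 = μ₁ := (sq_norm_sub_smul_eq_self_iff d c μ₁).2 hroot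
  refine ⟨⟨output_eq_of_sq_norm_sub_smul_eq_self had hac hμ₁,
    output_eq_of_sq_norm_sub_smul_eq_self hbd hbc hμ₁⟩, fun x h₁ h₂ => ?_⟩
  have hx : x = d - ‖x‖ ^ 2 • c :=
    eq_of_inner_eq_of_linearIndependent finrank_euclideanSpace_fin hab
      (inner_eq_inner_sub_sq_norm_smul had hac h₁) (inner_eq_inner_sub_sq_norm_smul hbd hbc h₂)
  have hroot_x := (sq_norm_sub_smul_eq_self_iff d c (‖x‖ ^ 2)).1 (by rw [← hx])
  have hle : ‖d - μ₁ • c‖ ^ 2 ≤ ‖x‖ ^ 2 := hμ₁.trans_le (hsmallest _ hroot_x)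
  exact (pow_le_pow_iff_left₀ (norm_nonneg _) (norm_nonneg _) two_ne_zero).1 hle

/-- if the system of quadratic output equations is solvable and `μ₁` is the
smallest real root of `‖c‖²μ² − (2⟨d,c⟩ + 1)μ + ‖d‖² = 0` (when `c = 0` the quadratic is
linear and its unique root is `‖d‖²`, so "smallest root" still applies), then `x₁ = d − μ₁c`
solves the system and has minimal norm among all solutions. -/
theorem stmt12 (α β ζ₁ ζ₂ S₁ S₂ : ℝ) (a b : EuclideanSpace ℝ (Fin 2))
    (hab : LinearIndependent ℝ ![a, b])
    (hsol : ∃ x : EuclideanSpace ℝ (Fin 2),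
      α * ‖x‖ ^ 2 + ⟪a, x⟫ + ζ₁ = S₁ ∧ β * ‖x‖ ^ 2 + ⟪b, x⟫ + ζ₂ = S₂)
    (μ₁ : ℝ)
    (hroot : ‖cvec a b α β‖ ^ 2 * μ₁ ^ 2 -
      (2 * ⟪dvec a b ζ₁ ζ₂ S₁ S₂, cvec a b α β⟫ + 1) * μ₁ +
      ‖dvec a b ζ₁ ζ₂ S₁ S₂‖ ^ 2 = 0)
    (hsmallest : ∀ μ : ℝ, ‖cvec a b α β‖ ^ 2 * μ ^ 2 -
      (2 * ⟪dvec a b ζ₁ ζ₂ S₁ S₂, cvec a b α β⟫ + 1) * μ +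
      ‖dvec a b ζ₁ ζ₂ S₁ S₂‖ ^ 2 = 0 → μ₁ ≤ μ) :
    (α * ‖dvec a b ζ₁ ζ₂ S₁ S₂ - μ₁ • cvec a b α β‖ ^ 2 +
        ⟪a, dvec a b ζ₁ ζ₂ S₁ S₂ - μ₁ • cvec a b α β⟫ + ζ₁ = S₁ ∧
      β * ‖dvec a b ζ₁ ζ₂ S₁ S₂ - μ₁ • cvec a b α β‖ ^ 2 +
        ⟪b, dvec a b ζ₁ ζ₂ S₁ S₂ - μ₁ • cvec a b α β⟫ + ζ₂ = S₂) ∧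
    ∀ x : EuclideanSpace ℝ (Fin 2),
      α * ‖x‖ ^ 2 + ⟪a, x⟫ + ζ₁ = S₁ → β * ‖x‖ ^ 2 + ⟪b, x⟫ + ζ₂ = S₂ →
      ‖dvec a b ζ₁ ζ₂ S₁ S₂ - μ₁ • cvec a b α β‖ ≤ ‖x‖ :=
  stmt12_general α β ζ₁ ζ₂ S₁ S₂ a b hab μ₁ hroot hsmallest
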